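/- arXiv:1910.04900 — 2 statements merged into one kernel-verified Lean document; each statement's English description precedes it below -/
import Mathlib

section
/- Let (P_i)_{i≥1} be [0,1]-valued p-values on a probability space and H0 ⊆ ℕ the index set of true nulls. Assume each null p-value P_i (i ∈ H0) is valid and is independent of the σ-algebra G_{i−1} = σ(P_1,…,P_{i−1}). Fix α ∈ (0,1) and for each i let α_i, λ_i : Ω → (0,1) be G_{i−1}-measurable, and assume that almost surely Σ_{i : P_i > λ_i} α_i/(1−λ_i) ≤ α. Then the expected number of false discoveries satisfies E[ #{ i ∈ H0 : P_i ≤ α_i } ] ≤ α; in particular ℙ(∃ i ∈ H0 with P_i ≤ α_i) ≤ α. -/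
open MeasureTheory ProbabilityTheory
open scoped ENNReal

/-! A null p-value `X` is rejected when `X ≤ a`; since `a` and `λ` are predictable and `X` is
independent of the past, conditionally on the past the rejection has probability at most `a`,
while the budget is charged `a / (1 - λ)` with probability `ℙ(X > λ) ≥ 1 - λ`, i.e. at least `a`
in expectation. Summing over the nulls, the expected number of false rejections is at most the
expected total charge, which is at most `α`; FWER ≤ PFER by the union bound. -/

/-- The σ-algebra generated by the first `i` p-values `P 0, …, P (i-1)`. -/
def pastFiltration {Ω : Type*} [MeasurableSpace Ω] (P : ℕ → Ω → ℝ) (i : ℕ) :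
    MeasurableSpace Ω :=
  ⨆ j ∈ Finset.range i, MeasurableSpace.comap (P j) inferInstance

theorem pastFiltration_le {Ω : Type*} [m : MeasurableSpace Ω] {P : ℕ → Ω → ℝ}
    (hP : ∀ i, Measurable (P i)) (i : ℕ) : pastFiltration P i ≤ m :=
  iSup₂_le fun j _ => (hP j).comap_le

theorem lintegral_tsum_indicator_one {Ω ι : Type*} [MeasurableSpace Ω] [Countable ι]
    {μ : Measure Ω} {s : ι → Set Ω} (hs : ∀ i, MeasurableSet (s i)) :
    ∫⁻ ω, ∑' i, (s i).indicator (fun _ => (1 : ℝ≥0∞)) ω ∂μ = ∑' i, μ (s i) := by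
  rw [lintegral_tsum fun i => (measurable_const.indicator (hs i)).aemeasurable]
  simp only [lintegral_indicator_const (hs _), one_mul]

noncomputable def spendingCost (a l x : ℝ) : ℝ≥0∞ :=
  ENNReal.ofReal (if l < x then a / (1 - l) else 0)

theorem Measurable.spendingCost {β : Type*} [MeasurableSpace β] {a l x : β → ℝ}
    (ha : Measurable a) (hl : Measurable l) (hx : Measurable x) :
    Measurable fun b => _root_.spendingCost (a b) (l b) (x b) :=
  (Measurable.ite (measurableSet_lt hl hx) (ha.div (measurable_const.sub hl))
    measurable_const).ennreal_ofReal

theorem lintegral_spendingCost (ν : Measure ℝ) (a l : ℝ) :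
    ∫⁻ x, spendingCost a l x ∂ν = ENNReal.ofReal (a / (1 - l)) * ν (Set.Ioi l) := by
  rw [← lintegral_indicator_const measurableSet_Ioi]
  congr 1 with x
  by_cases hx : l < x <;> simp [spendingCost, hx]

theorem measure_Iic_le_lintegral_spendingCost (ν : Measure ℝ) [IsProbabilityMeasure ν]
    (hvalid : ∀ x ∈ Set.Icc (0 : ℝ) 1, ν (Set.Iic x) ≤ ENNReal.ofReal x)
    {a l : ℝ} (ha : a ∈ Set.Ioo (0 : ℝ) 1) (hl : l ∈ Set.Ioo (0 : ℝ) 1) :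
    ν (Set.Iic a) ≤ ∫⁻ x, spendingCost a l x ∂ν := by
  have hl' : 0 < 1 - l := sub_pos.2 hl.2
  have hIoi : ENNReal.ofReal (1 - l) ≤ ν (Set.Ioi l) := by
    rw [← Set.compl_Iic, prob_compl_eq_one_sub measurableSet_Iic,
      ENNReal.ofReal_sub _ hl.1.le, ENNReal.ofReal_one]
    exact tsub_le_tsub_left (hvalid l (Set.Ioo_subset_Icc_self hl)) 1
  calc ν (Set.Iic a) ≤ ENNReal.ofReal a := hvalid a (Set.Ioo_subset_Icc_self ha)
    _ = ENNReal.ofReal (a / (1 - l)) * ENNReal.ofReal (1 - l) := by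
      rw [← ENNReal.ofReal_mul (div_nonneg ha.1.le hl'.le), div_mul_cancel₀ _ hl'.ne']
    _ ≤ ENNReal.ofReal (a / (1 - l)) * ν (Set.Ioi l) := by gcongr
    _ = ∫⁻ x, spendingCost a l x ∂ν := (lintegral_spendingCost ν a l).symm

theorem measure_setOf_le_le_lintegral_spendingCost {Ω : Type*} [MeasurableSpace Ω]
    {μ : Measure Ω} [IsProbabilityMeasure μ] {X a l : Ω → ℝ}
    (hX : Measurable X) (ha : Measurable a) (hl : Measurable l)
    (ha_range : ∀ ω, a ω ∈ Set.Ioo (0 : ℝ) 1) (hl_range : ∀ ω, l ω ∈ Set.Ioo (0 : ℝ) 1)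
    (hvalid : ∀ x ∈ Set.Icc (0 : ℝ) 1, μ {ω | X ω ≤ x} ≤ ENNReal.ofReal x)
    (hindep : IndepFun (fun ω => (a ω, l ω)) X μ) :
    μ {ω | X ω ≤ a ω} ≤ ∫⁻ ω, spendingCost (a ω) (l ω) (X ω) ∂μ := by
  set Y : Ω → ℝ × ℝ := fun ω => (a ω, l ω)
  have hY : Measurable Y := ha.prodMk hl
  have hmap : μ.map (fun ω => (Y ω, X ω)) = (μ.map Y).prod (μ.map X) :=
    (indepFun_iff_map_prod_eq_prod_map_map hY.aemeasurable hX.aemeasurable).1 hindep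
  have : IsProbabilityMeasure (μ.map X) := Measure.isProbabilityMeasure_map hX.aemeasurable
  have hvalid_map : ∀ x ∈ Set.Icc (0 : ℝ) 1, μ.map X (Set.Iic x) ≤ ENNReal.ofReal x :=
    fun x hx => (Measure.map_apply hX measurableSet_Iic).trans_le (hvalid x hx)
  have hY_range : ∀ᵐ y ∂μ.map Y, y ∈ Set.Ioo (0 : ℝ) 1 ×ˢ Set.Ioo (0 : ℝ) 1 :=
    (ae_map_iff hY.aemeasurable (measurableSet_Ioo.prod measurableSet_Ioo)).2
      (ae_of_all _ fun ω => ⟨ha_range ω, hl_range ω⟩)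
  have hrej : MeasurableSet {p : (ℝ × ℝ) × ℝ | p.2 ≤ p.1.1} :=
    measurableSet_le measurable_snd measurable_fst.fst
  have hcost : Measurable fun p : (ℝ × ℝ) × ℝ => spendingCost p.1.1 p.1.2 p.2 :=
    measurable_fst.fst.spendingCost measurable_fst.snd measurable_snd
  calc μ {ω | X ω ≤ a ω} = (μ.map Y).prod (μ.map X) {p | p.2 ≤ p.1.1} := by
        rw [← hmap, Measure.map_apply (hY.prodMk hX) hrej]; rfl
    _ = ∫⁻ y, μ.map X (Set.Iic y.1) ∂μ.map Y := Measure.prod_apply hrej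
    _ ≤ ∫⁻ y, ∫⁻ x, spendingCost y.1 y.2 x ∂μ.map X ∂μ.map Y := by
        refine lintegral_mono_ae ?_
        filter_upwards [hY_range] with y hy
        exact measure_Iic_le_lintegral_spendingCost _ hvalid_map hy.1 hy.2
    _ = ∫⁻ ω, spendingCost (a ω) (l ω) (X ω) ∂μ := by
        rw [← lintegral_prod _ hcost.aemeasurable, ← hmap,
          lintegral_map hcost (hY.prodMk hX)]

theorem adaptive_spending_pfer_control_general
    {Ω : Type*} [MeasurableSpace Ω] (μ : Measure Ω) [IsProbabilityMeasure μ]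
    (P : ℕ → Ω → ℝ) (hPmeas : ∀ i, Measurable (P i))
    (H0 : Set ℕ)
    (hvalid : ∀ i ∈ H0, ∀ x ∈ Set.Icc (0 : ℝ) 1,
      μ {ω | P i ω ≤ x} ≤ ENNReal.ofReal x)
    (hindep : ∀ i ∈ H0,
      Indep (MeasurableSpace.comap (P i) inferInstance) (pastFiltration P i) μ)
    (α : ℝ)
    (alev lamlev : ℕ → Ω → ℝ)
    (halev_meas : ∀ i, Measurable[pastFiltration P i] (alev i))
    (hlamlev_meas : ∀ i, Measurable[pastFiltration P i] (lamlev i))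
    (halev_range : ∀ i ω, alev i ω ∈ Set.Ioo (0 : ℝ) 1)
    (hlamlev_range : ∀ i ω, lamlev i ω ∈ Set.Ioo (0 : ℝ) 1)
    (hbudget : ∀ᵐ ω ∂μ,
      ∑' i, ENNReal.ofReal (if lamlev i ω < P i ω then alev i ω / (1 - lamlev i ω) else 0)
        ≤ ENNReal.ofReal α) :
    (∫⁻ ω, ∑' i : H0, Set.indicator {ω' | P i ω' ≤ alev i ω'} (fun _ => (1 : ℝ≥0∞)) ω ∂μ)
        ≤ ENNReal.ofReal α ∧
      μ {ω | ∃ i ∈ H0, P i ω ≤ alev i ω} ≤ ENNReal.ofReal α := by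
  have halev i : Measurable (alev i) := (halev_meas i).mono (pastFiltration_le hPmeas i) le_rfl
  have hlamlev i : Measurable (lamlev i) :=
    (hlamlev_meas i).mono (pastFiltration_le hPmeas i) le_rfl
  have hrej : ∀ i ∈ H0, μ {ω | P i ω ≤ alev i ω} ≤
      ∫⁻ ω, spendingCost (alev i ω) (lamlev i ω) (P i ω) ∂μ := fun i hi =>
    measure_setOf_le_le_lintegral_spendingCost (hPmeas i) (halev i) (hlamlev i) (halev_range i)
      (hlamlev_range i) (hvalid i hi) (indep_of_indep_of_le_right (hindep i hi)
        ((halev_meas i).prodMk (hlamlev_meas i)).comap_le).symm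
  have hpfer : ∑' i : H0, μ {ω | P i ω ≤ alev i ω} ≤ ENNReal.ofReal α :=
    calc ∑' i : H0, μ {ω | P i ω ≤ alev i ω}
        ≤ ∑' i : H0, ∫⁻ ω, spendingCost (alev i ω) (lamlev i ω) (P i ω) ∂μ :=
          ENNReal.tsum_le_tsum fun i => hrej i i.2
      _ ≤ ∑' i, ∫⁻ ω, spendingCost (alev i ω) (lamlev i ω) (P i ω) ∂μ :=
          ENNReal.tsum_comp_le_tsum_of_injective Subtype.val_injective _
      _ = ∫⁻ ω, ∑' i, spendingCost (alev i ω) (lamlev i ω) (P i ω) ∂μ :=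
          (lintegral_tsum fun i =>
            ((halev i).spendingCost (hlamlev i) (hPmeas i)).aemeasurable).symm
      _ ≤ ENNReal.ofReal α := (lintegral_mono_ae hbudget).trans_eq (by simp)
  refine ⟨(lintegral_tsum_indicator_one fun i : H0 =>
    measurableSet_le (hPmeas i) (halev i)).trans_le hpfer, ?_⟩
  have hunion : {ω | ∃ i ∈ H0, P i ω ≤ alev i ω} = ⋃ i : H0, {ω | P i ω ≤ alev i ω} := by
    ext; simp
  exact hunion ▸ (measure_iUnion_le _).trans hpfer

/-- **Adaptive-Spending controls PFER (and hence FWER).** If each null p-value is valid and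
independent of the past, the levels `α_i, λ_i` are predictable and `(0,1)`-valued, and a.s.
`∑_{i : P_i > λ_i} α_i/(1-λ_i) ≤ α`, then the expected number of false discoveries is at most
`α`; in particular the FWER is at most `α`. -/
theorem adaptive_spending_pfer_control
    {Ω : Type*} [MeasurableSpace Ω] (μ : Measure Ω) [IsProbabilityMeasure μ]
    (P : ℕ → Ω → ℝ) (hPmeas : ∀ i, Measurable (P i))
    (hPrange : ∀ i ω, P i ω ∈ Set.Icc (0 : ℝ) 1)
    (H0 : Set ℕ)
    (hvalid : ∀ i ∈ H0, ∀ x ∈ Set.Icc (0 : ℝ) 1,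
      μ {ω | P i ω ≤ x} ≤ ENNReal.ofReal x)
    (hindep : ∀ i ∈ H0,
      Indep (MeasurableSpace.comap (P i) inferInstance) (pastFiltration P i) μ)
    (α : ℝ) (hα : α ∈ Set.Ioo (0 : ℝ) 1)
    (alev lamlev : ℕ → Ω → ℝ)
    (halev_meas : ∀ i, Measurable[pastFiltration P i] (alev i))
    (hlamlev_meas : ∀ i, Measurable[pastFiltration P i] (lamlev i))
    (halev_range : ∀ i ω, alev i ω ∈ Set.Ioo (0 : ℝ) 1)
    (hlamlev_range : ∀ i ω, lamlev i ω ∈ Set.Ioo (0 : ℝ) 1)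
    (hbudget : ∀ᵐ ω ∂μ,
      ∑' i, ENNReal.ofReal (if lamlev i ω < P i ω then alev i ω / (1 - lamlev i ω) else 0)
        ≤ ENNReal.ofReal α) :
    (∫⁻ ω, ∑' i : H0, Set.indicator {ω' | P i ω' ≤ alev i ω'} (fun _ => (1 : ℝ≥0∞)) ω ∂μ)
        ≤ ENNReal.ofReal α ∧
      μ {ω | ∃ i ∈ H0, P i ω ≤ alev i ω} ≤ ENNReal.ofReal α :=
  adaptive_spending_pfer_control_general μ P hPmeas H0 hvalid hindep α alev lamlev halev_meas
    hlamlev_meas halev_range hlamlev_range hbudget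
end

section
/- Fix α ∈ (0,1/2), μ_A > 0 and π_A ∈ (0,1). For q > 1 define f_∞(q) = Σ_{i=1}^∞ π_A · Φ( Φ⁻¹( α·i^{−q}/ζ(q) ) + μ_A ). Then f_∞(q) is finite for every q > 1, and f_∞ is monotonically decreasing on (1,∞). -/
open MeasureTheory ProbabilityTheory

/-- The standard normal CDF `Φ`. -/
noncomputable def stdNormalCDF (x : ℝ) : ℝ :=
  (ProbabilityTheory.gaussianReal 0 1 (Set.Iic x)).toReal

/-- The inverse `Φ⁻¹` of the standard normal CDF (on `(0,1)`). -/
noncomputable def stdNormalQuantile : ℝ → ℝ :=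
  Function.invFun stdNormalCDF

/-- The (real) Riemann zeta function `ζ(q) = ∑_{i=1}^∞ i^{-q}`. -/
noncomputable def zetaReal (q : ℝ) : ℝ :=
  ∑' i : ℕ, ((i : ℝ) + 1) ^ (-q)

/-!
Write `g(x) = Φ(Φ⁻¹(x) + μ)` for the power at level `x`. Under `Z ~ N(0,1)`,
`Φ(t + μ) = E[1{Z ≤ t} L(Z)]`, where `L(u) = exp(-μu - μ²/2)` is the density of `N(-μ,1)`
with respect to `N(0,1)`. Hölder's inequality then gives `g(x) ≤ C_p x^{1/p}` for every `p > 1`, and the levels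
`α i^{-q}/ζ(q)` decay like `i^{-q}`, so the series converges.

Since `L` is decreasing, `g` is concave with slope `L(Φ⁻¹(x))` at `x`. The levels sum to `α`
for every `q`, and increasing `q` only moves level to earlier indices (all partial sums grow),
where the slopes are smaller; Abel summation against the increasing slopes shows that this
cannot increase the total power.
-/

open Real Set

theorem ProbabilityTheory.continuous_cdf (μ : Measure ℝ) [IsProbabilityMeasure μ]
    [NullSingletonClass μ] : Continuous (cdf μ) := by
  refine continuous_iff_continuousAt.2 fun x => ?_
  rw [(monotone_cdf μ).continuousAt_iff_leftLim_eq_rightLim, (cdf μ).rightLim_eq]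
  have h := (cdf μ).measure_singleton x
  rw [measure_cdf, measure_singleton, eq_comm, ENNReal.ofReal_eq_zero] at h
  exact le_antisymm ((monotone_cdf μ).leftLim_le le_rfl) (by linarith)

theorem ProbabilityTheory.Ioo_subset_range_cdf (μ : Measure ℝ) [IsProbabilityMeasure μ]
    [NullSingletonClass μ] : Ioo 0 1 ⊆ range (cdf μ) := fun _ hy =>
  mem_range_of_exists_le_of_exists_ge (continuous_cdf μ)
    (((tendsto_cdf_atBot μ).eventually_lt_const hy.1).exists.imp fun _ => le_of_lt)
    (((tendsto_cdf_atTop μ).eventually_const_lt hy.2).exists.imp fun _ => le_of_lt)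

lemma stdNormalCDF_eq_cdf : stdNormalCDF = cdf (gaussianReal 0 1) :=
  funext fun x => (cdf_eq_real _ x).symm

lemma stdNormalCDF_nonneg (x : ℝ) : 0 ≤ stdNormalCDF x := ENNReal.toReal_nonneg

lemma monotone_stdNormalCDF : Monotone stdNormalCDF :=
  stdNormalCDF_eq_cdf ▸ monotone_cdf _

lemma stdNormalCDF_sub_stdNormalCDF {s t : ℝ} (hst : s ≤ t) :
    stdNormalCDF t - stdNormalCDF s = (gaussianReal 0 1).real (Ioc s t) := by
  have h := measureReal_union (μ := gaussianReal 0 1) (Iic_disjoint_Ioc (le_refl s))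
    (measurableSet_Ioc (b := t))
  rw [Iic_union_Ioc_eq_Iic hst] at h
  simp only [stdNormalCDF, ← measureReal_def, h, add_sub_cancel_left]

lemma stdNormalCDF_stdNormalQuantile {y : ℝ} (hy : y ∈ Ioo 0 1) :
    stdNormalCDF (stdNormalQuantile y) = y := by
  have := nullSingletonClass_gaussianReal (μ := 0) one_ne_zero
  obtain ⟨x, hx⟩ := Ioo_subset_range_cdf (gaussianReal 0 1) hy
  rw [← stdNormalCDF_eq_cdf] at hx
  exact Function.invFun_eq ⟨x, hx⟩

lemma monotoneOn_stdNormalQuantile : MonotoneOn stdNormalQuantile (Ioo 0 1) := by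
  intro x hx y hy hxy
  rcases hxy.eq_or_lt with rfl | hlt
  · rfl
  refine le_of_not_gt fun h => hlt.not_ge ?_
  simpa only [stdNormalCDF_stdNormalQuantile hx, stdNormalCDF_stdNormalQuantile hy]
    using monotone_stdNormalCDF h.le

noncomputable def gaussianShiftDensity (μ u : ℝ) : ℝ := exp (-(μ * u) - μ ^ 2 / 2)

lemma gaussianShiftDensity_pos (μ u : ℝ) : 0 < gaussianShiftDensity μ u := exp_pos _

lemma antitone_gaussianShiftDensity {μ : ℝ} (hμ : 0 ≤ μ) : Antitone (gaussianShiftDensity μ) :=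
  fun _ _ h => exp_le_exp.2 (by nlinarith)

lemma gaussianPDFReal_mul_gaussianShiftDensity (μ u : ℝ) :
    gaussianPDFReal 0 1 u * gaussianShiftDensity μ u = gaussianPDFReal (-μ) 1 u := by
  simp only [gaussianPDFReal, gaussianShiftDensity, mul_assoc, ← exp_add]
  congr 3
  push_cast
  ring

lemma gaussianShiftDensity_rpow (μ r u : ℝ) :
    gaussianShiftDensity μ u ^ r = exp (-(r * μ ^ 2 / 2)) * exp (-(r * μ) * u) := by
  rw [gaussianShiftDensity, ← exp_mul, ← exp_add]
  ring_nf

lemma integrable_gaussianShiftDensity_rpow (μ r : ℝ) :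
    Integrable (fun u => gaussianShiftDensity μ u ^ r) (gaussianReal 0 1) := by
  simp only [gaussianShiftDensity_rpow]
  exact (integrable_exp_mul_gaussianReal _).const_mul _

lemma integrable_gaussianShiftDensity (μ : ℝ) :
    Integrable (gaussianShiftDensity μ) (gaussianReal 0 1) := by
  simpa using integrable_gaussianShiftDensity_rpow μ 1

lemma integral_gaussianShiftDensity_rpow (μ r : ℝ) :
    ∫ u, gaussianShiftDensity μ u ^ r ∂gaussianReal 0 1 = exp ((r - 1) * r * μ ^ 2 / 2) := by
  have hmgf := congrFun (mgf_fun_id_gaussianReal (μ := 0) (v := 1)) (-(r * μ))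
  simp only [mgf] at hmgf
  simp only [gaussianShiftDensity_rpow]
  rw [integral_const_mul, hmgf, ← exp_add]
  congr 1
  push_cast
  ring

lemma stdNormalCDF_add_eq_setIntegral (μ t : ℝ) :
    stdNormalCDF (t + μ) = ∫ u in Iic t, gaussianShiftDensity μ u ∂gaussianReal 0 1 := by
  have hmap : (gaussianReal 0 1).map (· - μ) = gaussianReal (-μ) 1 := by
    rw [gaussianReal_map_sub_const, zero_sub]
  have hpre : (· - μ) ⁻¹' Iic t = Iic (t + μ) := by
    ext u; simp
  have hint : 0 ≤ ∫ u in Iic t, gaussianPDFReal (-μ) 1 u :=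
    setIntegral_nonneg measurableSet_Iic fun u _ => gaussianPDFReal_nonneg _ _ u
  rw [gaussianReal_of_var_ne_zero 0 one_ne_zero,
    setIntegral_withDensity_eq_setIntegral_toReal_smul' _ (measurable_gaussianPDF 0 1)
      (ae_of_all _ fun _ => gaussianPDF_lt_top)]
  simp only [toReal_gaussianPDF, smul_eq_mul, gaussianPDFReal_mul_gaussianShiftDensity]
  rw [← ENNReal.toReal_ofReal hint, ← gaussianReal_apply_eq_integral _ one_ne_zero, ← hmap,
    Measure.map_apply (by fun_prop) measurableSet_Iic, hpre]
  rfl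

lemma stdNormalCDF_add_sub_stdNormalCDF_add (μ : ℝ) {s t : ℝ} (hst : s ≤ t) :
    stdNormalCDF (t + μ) - stdNormalCDF (s + μ)
      = ∫ u in Ioc s t, gaussianShiftDensity μ u ∂gaussianReal 0 1 := by
  rw [stdNormalCDF_add_eq_setIntegral, stdNormalCDF_add_eq_setIntegral, ← Iic_union_Ioc_eq_Iic hst,
    setIntegral_union (Iic_disjoint_Ioc le_rfl) measurableSet_Ioc
      (integrable_gaussianShiftDensity μ).integrableOn
      (integrable_gaussianShiftDensity μ).integrableOn,
    add_sub_cancel_left]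

lemma gaussianShiftDensity_mul_sub_le {μ s t : ℝ} (hμ : 0 ≤ μ) (hst : s ≤ t) :
    gaussianShiftDensity μ t * (stdNormalCDF t - stdNormalCDF s)
      ≤ stdNormalCDF (t + μ) - stdNormalCDF (s + μ) := by
  rw [stdNormalCDF_add_sub_stdNormalCDF_add μ hst, stdNormalCDF_sub_stdNormalCDF hst, mul_comm,
    ← smul_eq_mul, ← setIntegral_const]
  exact setIntegral_mono_on (integrableOn_const (measure_ne_top _ _))
    (integrable_gaussianShiftDensity μ).integrableOn measurableSet_Ioc
    fun u hu => antitone_gaussianShiftDensity hμ hu.2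

lemma sub_le_gaussianShiftDensity_mul {μ s t : ℝ} (hμ : 0 ≤ μ) (hst : s ≤ t) :
    stdNormalCDF (t + μ) - stdNormalCDF (s + μ)
      ≤ gaussianShiftDensity μ s * (stdNormalCDF t - stdNormalCDF s) := by
  rw [stdNormalCDF_add_sub_stdNormalCDF_add μ hst, stdNormalCDF_sub_stdNormalCDF hst, mul_comm,
    ← smul_eq_mul, ← setIntegral_const]
  exact setIntegral_mono_on (integrable_gaussianShiftDensity μ).integrableOn
    (integrableOn_const (measure_ne_top _ _)) measurableSet_Ioc
    fun u hu => antitone_gaussianShiftDensity hμ hu.1.le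

lemma gaussianShiftDensity_mul_le {μ : ℝ} (hμ : 0 ≤ μ) (t : ℝ) :
    gaussianShiftDensity μ t * stdNormalCDF t ≤ stdNormalCDF (t + μ) := by
  rw [stdNormalCDF_add_eq_setIntegral, mul_comm, stdNormalCDF, ← measureReal_def,
    ← smul_eq_mul, ← setIntegral_const]
  exact setIntegral_mono_on (integrableOn_const (measure_ne_top _ _))
    (integrable_gaussianShiftDensity μ).integrableOn measurableSet_Iic
    fun u hu => antitone_gaussianShiftDensity hμ hu

lemma stdNormalCDF_add_le_rpow_mul {p r : ℝ} (hpr : p.HolderConjugate r) (μ t : ℝ) :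
    stdNormalCDF (t + μ) ≤ stdNormalCDF t ^ (1 / p) * exp ((r - 1) * μ ^ 2 / 2) := by
  have hp := hpr.pos
  have hr := hpr.symm.pos
  have hL : MemLp (gaussianShiftDensity μ) (ENNReal.ofReal r) (gaussianReal 0 1) := by
    refine (integrable_norm_rpow_iff (by fun_prop [gaussianShiftDensity]) (by simpa using hr)
      ENNReal.ofReal_ne_top).1 ?_
    simpa [ENNReal.toReal_ofReal hr.le, abs_of_pos (gaussianShiftDensity_pos _ _)]
      using integrable_gaussianShiftDensity_rpow μ r
  have hind : MemLp ((Iic t).indicator fun _ => (1 : ℝ)) (ENNReal.ofReal p) (gaussianReal 0 1) :=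
    (memLp_const 1).indicator measurableSet_Iic
  have holder := integral_mul_le_Lp_mul_Lq_of_nonneg hpr
    (ae_of_all _ (indicator_nonneg fun _ _ => zero_le_one))
    (ae_of_all _ fun u => (gaussianShiftDensity_pos μ u).le) hind hL
  have hind_rpow : ∫ u, (Iic t).indicator (fun _ => (1 : ℝ)) u ^ p ∂gaussianReal 0 1
      = stdNormalCDF t := by
    have : ∀ u, (Iic t).indicator (fun _ => (1 : ℝ)) u ^ p = (Iic t).indicator 1 u := fun u => by
      by_cases hu : u ∈ Iic t <;> simp [hu, hp.ne']
    simp only [this, integral_indicator_one measurableSet_Iic]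
    rfl
  have hexp_rpow : exp ((r - 1) * r * μ ^ 2 / 2) ^ (1 / r) = exp ((r - 1) * μ ^ 2 / 2) := by
    rw [← exp_mul]
    field_simp
  rw [hind_rpow, integral_gaussianShiftDensity_rpow, hexp_rpow] at holder
  rw [stdNormalCDF_add_eq_setIntegral, ← integral_indicator measurableSet_Iic]
  refine (integral_congr_ae (ae_of_all _ fun u => ?_)).trans_le holder
  by_cases hu : u ∈ Iic t <;> simp [hu]

noncomputable def zTestPower (μ x : ℝ) : ℝ := stdNormalCDF (stdNormalQuantile x + μ)

lemma zTestPower_nonneg (μ x : ℝ) : 0 ≤ zTestPower μ x := stdNormalCDF_nonneg _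

lemma zTestPower_sub_le {μ x y : ℝ} (hμ : 0 ≤ μ) (hx : x ∈ Ioo 0 1) (hy : y ∈ Ioo 0 1) :
    zTestPower μ x - zTestPower μ y ≤ gaussianShiftDensity μ (stdNormalQuantile y) * (x - y) := by
  unfold zTestPower
  rcases le_total y x with hyx | hxy
  · have h := sub_le_gaussianShiftDensity_mul hμ (monotoneOn_stdNormalQuantile hy hx hyx)
    rwa [stdNormalCDF_stdNormalQuantile hx, stdNormalCDF_stdNormalQuantile hy] at h
  · have h := gaussianShiftDensity_mul_sub_le hμ (monotoneOn_stdNormalQuantile hx hy hxy)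
    rw [stdNormalCDF_stdNormalQuantile hx, stdNormalCDF_stdNormalQuantile hy] at h
    linarith

lemma gaussianShiftDensity_mul_le_zTestPower {μ y : ℝ} (hμ : 0 ≤ μ) (hy : y ∈ Ioo 0 1) :
    gaussianShiftDensity μ (stdNormalQuantile y) * y ≤ zTestPower μ y := by
  simpa only [zTestPower, stdNormalCDF_stdNormalQuantile hy] using
    gaussianShiftDensity_mul_le hμ (stdNormalQuantile y)

lemma zTestPower_le_rpow_mul {p r : ℝ} (hpr : p.HolderConjugate r) (μ : ℝ) {y : ℝ}
    (hy : y ∈ Ioo 0 1) : zTestPower μ y ≤ y ^ (1 / p) * exp ((r - 1) * μ ^ 2 / 2) := by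
  simpa only [zTestPower, stdNormalCDF_stdNormalQuantile hy] using
    stdNormalCDF_add_le_rpow_mul hpr μ (stdNormalQuantile y)

section Majorization

open Finset

lemma sum_range_mul_le_mul_sum_range {R : Type*} [CommRing R] [LinearOrder R]
    [IsStrictOrderedRing R] {c d : ℕ → R} (hc : Monotone c)
    (hd : ∀ n, 0 ≤ ∑ i ∈ range n, d i) (n : ℕ) :
    ∑ i ∈ range n, c i * d i ≤ c n * ∑ i ∈ range n, d i := by
  induction n with
  | zero => simp
  | succ n ih =>
    rw [sum_range_succ, sum_range_succ]
    calc ∑ i ∈ range n, c i * d i + c n * d n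
        ≤ c n * (∑ i ∈ range n, d i + d n) := by linarith
      _ ≤ c (n + 1) * (∑ i ∈ range n, d i + d n) :=
        mul_le_mul_of_nonneg_right (hc n.le_succ) (by simpa [sum_range_succ] using hd (n + 1))

lemma sum_range_mul_tsum_le {w w' : ℕ → ℝ} (hw : Summable w) (hw' : Summable w')
    (hcross : ∀ i j, i < j → w i * w' j ≤ w' i * w j) (n : ℕ) :
    (∑ i ∈ range n, w i) * ∑' j, w' j ≤ (∑ i ∈ range n, w' i) * ∑' j, w j := by
  rw [← hw.sum_add_tsum_nat_add n, ← hw'.sum_add_tsum_nat_add n, mul_add, mul_add, mul_comm]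
  refine add_le_add le_rfl ?_
  rw [← tsum_mul_left, ← tsum_mul_left]
  refine ((summable_nat_add_iff n).2 hw').mul_left _ |>.tsum_le_tsum (fun j => ?_)
    (((summable_nat_add_iff n).2 hw).mul_left _)
  rw [sum_mul, sum_mul]
  exact sum_le_sum fun i hi => hcross i (j + n) (by rw [Finset.mem_range] at hi; omega)

theorem tsum_le_tsum_of_sub_le_mul_of_majorizes {a b c u v : ℕ → ℝ}
    (ha : ∀ i, 0 ≤ a i) (hb : ∀ i, 0 ≤ b i) (hsa : Summable a) (hsb : Summable b)
    (htsum : ∑' i, a i = ∑' i, b i) (hmaj : ∀ n, ∑ i ∈ range n, b i ≤ ∑ i ∈ range n, a i)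
    (hc : Monotone c) (hc0 : ∀ i, 0 ≤ c i) (hcb : Summable fun i => c i * b i)
    (hu : Summable u) (hv : Summable v) (huv : ∀ i, u i - v i ≤ c i * (a i - b i)) :
    ∑' i, u i ≤ ∑' i, v i := by
  have hgap_nonneg (n : ℕ) : 0 ≤ ∑ i ∈ range n, (a i - b i) := by
    rw [sum_sub_distrib, sub_nonneg]
    exact hmaj n
  have hgap_le_tail (n : ℕ) : ∑ i ∈ range n, (a i - b i) ≤ ∑' i, b (i + n) := by
    have hsplit_a := hsa.sum_add_tsum_nat_add n
    have hsplit_b := hsb.sum_add_tsum_nat_add n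
    have htail_a : 0 ≤ ∑' i, a (i + n) := tsum_nonneg fun i => ha (i + n)
    rw [sum_sub_distrib]
    linarith
  have hpartial (n : ℕ) : ∑ i ∈ range n, (u i - v i) ≤ ∑' i, c (i + n) * b (i + n) :=
    calc ∑ i ∈ range n, (u i - v i)
        ≤ ∑ i ∈ range n, c i * (a i - b i) := sum_le_sum fun i _ => huv i
      _ ≤ c n * ∑ i ∈ range n, (a i - b i) := sum_range_mul_le_mul_sum_range hc hgap_nonneg n
      _ ≤ c n * ∑' i, b (i + n) := mul_le_mul_of_nonneg_left (hgap_le_tail n) (hc0 n)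
      _ = ∑' i, c n * b (i + n) := tsum_mul_left.symm
      _ ≤ ∑' i, c (i + n) * b (i + n) :=
        (((summable_nat_add_iff n).2 hsb).mul_left _).tsum_le_tsum
          (fun i => mul_le_mul_of_nonneg_right (hc (n.le_add_left i)) (hb (i + n)))
          ((summable_nat_add_iff n).2 hcb)
  have hlim := (hu.sub hv).hasSum.tendsto_sum_nat
  rw [hu.tsum_sub hv] at hlim
  exact sub_nonpos.1 <|
    le_of_tendsto_of_tendsto' hlim (tendsto_sum_nat_add fun i => c i * b i) hpartial

end Majorization

section QSeries

lemma summable_nat_add_one_rpow_neg {p : ℝ} (hp : 1 < p) :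
    Summable fun i : ℕ => ((i : ℝ) + 1) ^ (-p) := by
  have h := (summable_nat_add_iff 1).2 (Real.summable_nat_rpow.2 (by linarith : -p < -1))
  exact h.congr fun i => by push_cast; rfl

lemma one_le_zetaReal {q : ℝ} (hq : 1 < q) : 1 ≤ zetaReal q := by
  simpa [zetaReal] using (summable_nat_add_one_rpow_neg hq).le_tsum 0 fun i _ => by positivity

lemma zetaReal_pos {q : ℝ} (hq : 1 < q) : 0 < zetaReal q :=
  zero_lt_one.trans_le (one_le_zetaReal hq)

lemma rpow_neg_mul_rpow_neg_le {x y q q' : ℝ} (hx : 0 < x) (hxy : x ≤ y) (hqq' : q ≤ q') :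
    x ^ (-q) * y ^ (-q') ≤ x ^ (-q') * y ^ (-q) := by
  have hy : 0 < y := hx.trans_le hxy
  have hratio : y ^ (q - q') ≤ x ^ (q - q') := rpow_le_rpow_of_nonpos hx hxy (by linarith)
  calc x ^ (-q) * y ^ (-q')
      = x ^ (-q) * y ^ (-q) * y ^ (q - q') := by rw [mul_assoc, ← rpow_add hy]; ring_nf
    _ ≤ x ^ (-q) * y ^ (-q) * x ^ (q - q') := by gcongr
    _ = x ^ (-q') * y ^ (-q) := by rw [mul_right_comm, ← rpow_add hx]; ring_nf

noncomputable def qSeriesLevel (α q : ℝ) (i : ℕ) : ℝ := α * ((i : ℝ) + 1) ^ (-q) / zetaReal q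

variable {α q : ℝ}

lemma hasSum_qSeriesLevel (hq : 1 < q) : HasSum (qSeriesLevel α q) α := by
  have h := ((summable_nat_add_one_rpow_neg hq).hasSum.mul_left (α / zetaReal q))
  change HasSum _ (α / zetaReal q * zetaReal q) at h
  rw [div_mul_cancel₀ _ (zetaReal_pos hq).ne'] at h
  exact h.congr_fun fun i => by rw [qSeriesLevel]; ring

lemma qSeriesLevel_le_mul_rpow (hα : 0 ≤ α) (hq : 1 < q) (i : ℕ) :
    qSeriesLevel α q i ≤ α * ((i : ℝ) + 1) ^ (-q) :=
  div_le_self (by positivity) (one_le_zetaReal hq)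

lemma qSeriesLevel_mem_Ioo (hα : α ∈ Ioo 0 1) (hq : 1 < q) (i : ℕ) :
    qSeriesLevel α q i ∈ Ioo 0 1 := by
  have hrpow : ((i : ℝ) + 1) ^ (-q) ≤ 1 :=
    rpow_le_one_of_one_le_of_nonpos (by linarith [i.cast_nonneg (α := ℝ)]) (by linarith)
  refine ⟨div_pos (mul_pos hα.1 (by positivity)) (zetaReal_pos hq), ?_⟩
  calc qSeriesLevel α q i ≤ α * ((i : ℝ) + 1) ^ (-q) := qSeriesLevel_le_mul_rpow hα.1.le hq i
    _ ≤ α * 1 := by gcongr; exact hα.1.le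
    _ < 1 := by linarith [hα.2]

lemma antitone_qSeriesLevel (hα : 0 ≤ α) (hq : 1 < q) : Antitone (qSeriesLevel α q) := by
  intro i j hij
  have hrpow : ((j : ℝ) + 1) ^ (-q) ≤ ((i : ℝ) + 1) ^ (-q) :=
    rpow_le_rpow_of_nonpos (by positivity) (by gcongr) (by linarith)
  unfold qSeriesLevel
  gcongr
  exact (zetaReal_pos hq).le

lemma sum_range_qSeriesLevel_le (hα : 0 ≤ α) (hq : 1 < q) {q' : ℝ} (hqq' : q ≤ q') (n : ℕ) :
    ∑ i ∈ Finset.range n, qSeriesLevel α q i ≤ ∑ i ∈ Finset.range n, qSeriesLevel α q' i := by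
  have hq' : 1 < q' := hq.trans_le hqq'
  have hsum (p : ℝ) : ∑ i ∈ Finset.range n, qSeriesLevel α p i
      = α * (∑ i ∈ Finset.range n, ((i : ℝ) + 1) ^ (-p)) / zetaReal p := by
    simp only [qSeriesLevel, ← Finset.sum_div, ← Finset.mul_sum]
  have hcross := sum_range_mul_tsum_le (summable_nat_add_one_rpow_neg hq)
    (summable_nat_add_one_rpow_neg hq') (fun i j hij => rpow_neg_mul_rpow_neg_le (by positivity)
      (by gcongr) hqq') n
  rw [hsum, hsum, div_le_div_iff₀ (zetaReal_pos hq) (zetaReal_pos hq'), mul_assoc, mul_assoc]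
  exact mul_le_mul_of_nonneg_left hcross hα

end QSeries

section TotalPower

variable {α q : ℝ}

lemma summable_zTestPower_qSeriesLevel (hα : α ∈ Ioo 0 1) (hq : 1 < q) (μ : ℝ) :
    Summable fun i => zTestPower μ (qSeriesLevel α q i) := by
  -- any `p ∈ (1, q)` works
  set p := (1 + q) / 2 with hp_def
  have hp : 1 < p := by linarith
  have hqp : 1 < q / p := by rw [lt_div_iff₀ (by linarith)]; linarith
  set C := exp ((p.conjExponent - 1) * μ ^ 2 / 2)
  refine Summable.of_nonneg_of_le (fun i => zTestPower_nonneg μ _) (fun i => ?_)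
    ((summable_nat_add_one_rpow_neg hqp).mul_left (α ^ (1 / p) * C))
  have hbase : (0 : ℝ) ≤ (i : ℝ) + 1 := by positivity
  calc zTestPower μ (qSeriesLevel α q i)
      ≤ qSeriesLevel α q i ^ (1 / p) * C :=
        zTestPower_le_rpow_mul (.conjExponent hp) μ (qSeriesLevel_mem_Ioo hα hq i)
    _ ≤ (α * ((i : ℝ) + 1) ^ (-q)) ^ (1 / p) * C := by
        gcongr
        · exact (qSeriesLevel_mem_Ioo hα hq i).1.le
        · exact qSeriesLevel_le_mul_rpow hα.1.le hq i
    _ = α ^ (1 / p) * C * ((i : ℝ) + 1) ^ (-(q / p)) := by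
        rw [mul_rpow hα.1.le (rpow_nonneg hbase _), ← rpow_mul hbase]
        ring_nf

lemma tsum_zTestPower_qSeriesLevel_le {μ : ℝ} (hα : α ∈ Ioo 0 1) (hμ : 0 ≤ μ) (hq : 1 < q) {q' : ℝ}
    (hqq' : q ≤ q') :
    ∑' i, zTestPower μ (qSeriesLevel α q' i) ≤ ∑' i, zTestPower μ (qSeriesLevel α q i) := by
  have hq' : 1 < q' := hq.trans_le hqq'
  have hlevel := qSeriesLevel_mem_Ioo hα hq
  have hlevel' := qSeriesLevel_mem_Ioo hα hq'
  refine tsum_le_tsum_of_sub_le_mul_of_majorizes (c := fun i =>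
      gaussianShiftDensity μ (stdNormalQuantile (qSeriesLevel α q i)))
    (fun i => (hlevel' i).1.le) (fun i => (hlevel i).1.le)
    (hasSum_qSeriesLevel hq').summable (hasSum_qSeriesLevel hq).summable
    ((hasSum_qSeriesLevel hq').tsum_eq.trans (hasSum_qSeriesLevel hq).tsum_eq.symm)
    (sum_range_qSeriesLevel_le hα.1.le hq hqq')
    (fun i j hij => antitone_gaussianShiftDensity hμ
      (monotoneOn_stdNormalQuantile (hlevel j) (hlevel i) (antitone_qSeriesLevel hα.1.le hq hij)))
    (fun i => (gaussianShiftDensity_pos _ _).le) ?_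
    (summable_zTestPower_qSeriesLevel hα hq' μ) (summable_zTestPower_qSeriesLevel hα hq μ)
    (fun i => zTestPower_sub_le hμ (hlevel' i) (hlevel i))
  exact Summable.of_nonneg_of_le
    (fun i => mul_nonneg (gaussianShiftDensity_pos _ _).le (hlevel i).1.le)
    (fun i => gaussianShiftDensity_mul_le_zTestPower hμ (hlevel i))
    (summable_zTestPower_qSeriesLevel hα hq μ)

end TotalPower

/-- **The total expected number of true discoveries of Alpha-Spending with `q`-series is
finite and decreasing in `q`.** For `f_∞(q) = ∑_{i=1}^∞ π_A Φ(Φ⁻¹(α i^{-q}/ζ(q)) + μ_A)`,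
the series converges for every `q > 1`, and `f_∞` is monotonically decreasing on `(1,∞)`. -/
theorem alpha_spending_q_series_total_power_finite_and_decreasing
    (α μA πA : ℝ) (hα : α ∈ Set.Ioo (0 : ℝ) (1 / 2)) (hμA : 0 < μA)
    (hπA : πA ∈ Set.Ioo (0 : ℝ) 1)
    (finf : ℝ → ℝ)
    (hfinf : ∀ q, finf q = ∑' i : ℕ,
      πA * stdNormalCDF (stdNormalQuantile (α * ((i : ℝ) + 1) ^ (-q) / zetaReal q) + μA)) :
    (∀ q ∈ Set.Ioi (1 : ℝ), Summable (fun i : ℕ =>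
        πA * stdNormalCDF (stdNormalQuantile (α * ((i : ℝ) + 1) ^ (-q) / zetaReal q) + μA))) ∧
      AntitoneOn finf (Set.Ioi (1 : ℝ)) := by
  have hα' : α ∈ Ioo 0 1 := ⟨hα.1, by linarith [hα.2]⟩
  refine ⟨fun q hq => (summable_zTestPower_qSeriesLevel hα' hq μA).mul_left πA, ?_⟩
  intro q hq q' _ hqq'
  rw [hfinf, hfinf, tsum_mul_left, tsum_mul_left]
  exact mul_le_mul_of_nonneg_left (tsum_zTestPower_qSeriesLevel_le hα' hμA.le hq hqq') hπA.1.le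
end
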